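/- arXiv:1806.03949 — 3 statements merged into one kernel-verified Lean document; each statement's English description precedes it below -/
import Mathlib

section
/- Let E be a real normed vector space, let λ₁, λ₂, λ₃, r₁, r₂, k, M be positive real numbers, let x : [0,∞) → E, and let v : [0,∞) → ℝ be differentiable with v(t) > 0 for all t ≥ 0. Assume: (i) λ₁·‖x(t)‖^{r₁} ≤ v(t) for all t ≥ 0, (ii) v(0) ≤ λ₂·M^{r₂}, and (iii) v'(t) + λ₃·v(t)^{1+k} ≤ 0 for all t ≥ 0. Then for all t ≥ 0, ‖x(t)‖ ≤ (1/λ₁)^{1/r₁} · (λ₂^{-k}·M^{-r₂·k} + λ₃·k·t)^{-1/(k·r₁)}. -/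
/-- Quantitative single-trajectory form of the Lyapunov criterion for global
rational stability. -/
theorem rational_stability_lyapunov
    {E : Type*} [NormedAddCommGroup E] [NormedSpace ℝ E]
    (lam1 lam2 lam3 r1 r2 k M : ℝ)
    (hlam1 : 0 < lam1) (hlam2 : 0 < lam2) (hlam3 : 0 < lam3)
    (hr1 : 0 < r1) (hr2 : 0 < r2) (hk : 0 < k) (hM : 0 < M)
    (x : ℝ → E) (v v' : ℝ → ℝ)
    (hderiv : ∀ t, 0 ≤ t → HasDerivAt v (v' t) t)
    (hpos : ∀ t, 0 ≤ t → 0 < v t)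
    (hlow : ∀ t, 0 ≤ t → lam1 * ‖x t‖ ^ r1 ≤ v t)
    (hup : v 0 ≤ lam2 * M ^ r2)
    (hineq : ∀ t, 0 ≤ t → v' t + lam3 * v t ^ (1 + k) ≤ 0) :
    ∀ t, 0 ≤ t →
      ‖x t‖ ≤ (1 / lam1) ^ (1 / r1) *
        (lam2 ^ (-k) * M ^ (-(r2 * k)) + lam3 * k * t) ^ (-(1 / (k * r1))) := by
  intro t ht
  set g : ℝ → ℝ := fun s => v s ^ (-k) - lam3 * k * s with hg_def
  have hg : ∀ s, 0 ≤ s →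
      HasDerivAt g (v' s * (-k) * v s ^ (-k - 1) - lam3 * k) s := by
    intro s hs
    have h1 := (hderiv s hs).rpow_const (p := -k) (Or.inl (hpos s hs).ne')
    have h2 : HasDerivAt (fun u : ℝ => lam3 * k * u) (lam3 * k) s := by
      simpa using (hasDerivAt_id s).const_mul (lam3 * k)
    exact h1.sub h2
  -- derivative of g is nonneg on [0, ∞)
  have hgd : ∀ s, 0 ≤ s → 0 ≤ v' s * (-k) * v s ^ (-k - 1) - lam3 * k := by
    intro s hs
    have hv := hpos s hs
    have hvp : 0 < v s ^ (-k - 1) := Real.rpow_pos_of_pos hv _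
    have hkey : v s ^ (1 + k) * v s ^ (-k - 1) = 1 := by
      rw [← Real.rpow_add hv, show 1 + k + (-k - 1) = 0 by ring, Real.rpow_zero]
    have h1 : v' s ≤ -(lam3 * v s ^ (1 + k)) := by linarith [hineq s hs]
    have h2 : v' s * v s ^ (-k - 1) ≤ -(lam3 * v s ^ (1 + k)) * v s ^ (-k - 1) :=
      mul_le_mul_of_nonneg_right h1 hvp.le
    have h3 : -(lam3 * v s ^ (1 + k)) * v s ^ (-k - 1) = -lam3 := by
      rw [neg_mul, mul_assoc, hkey, mul_one]
    nlinarith [h2, h3]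
  -- g is monotone on [0, ∞)
  have hmono : MonotoneOn g (Set.Ici (0 : ℝ)) := by
    apply monotoneOn_of_deriv_nonneg (convex_Ici 0)
    · intro s hs
      exact (hg s hs).continuousAt.continuousWithinAt
    · intro s hs
      rw [interior_Ici] at hs
      exact (hg s (le_of_lt hs)).differentiableAt.differentiableWithinAt
    · intro s hs
      rw [interior_Ici] at hs
      rw [(hg s (le_of_lt hs)).deriv]
      exact hgd s (le_of_lt hs)
  have hg0t : g 0 ≤ g t := hmono Set.self_mem_Ici ht ht
  have hg0 : g 0 = v 0 ^ (-k) := by simp [hg_def]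
  -- lower bound on v 0 ^ (-k)
  have hv0 : 0 < v 0 := hpos 0 le_rfl
  have hb : lam2 ^ (-k) * M ^ (-(r2 * k)) ≤ v 0 ^ (-k) := by
    have h1 : (lam2 * M ^ r2) ^ (-k) ≤ v 0 ^ (-k) :=
      Real.rpow_le_rpow_of_nonpos hv0 hup (neg_nonpos.mpr hk.le)
    have h2 : (lam2 * M ^ r2) ^ (-k) = lam2 ^ (-k) * M ^ (-(r2 * k)) := by
      rw [Real.mul_rpow hlam2.le (Real.rpow_pos_of_pos hM r2).le,
        ← Real.rpow_mul hM.le]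
      ring_nf
    linarith [h1, h2.symm.le]
  set A : ℝ := lam2 ^ (-k) * M ^ (-(r2 * k)) + lam3 * k * t with hA_def
  have hApos : 0 < A := by
    have : 0 < lam2 ^ (-k) * M ^ (-(r2 * k)) :=
      mul_pos (Real.rpow_pos_of_pos hlam2 _) (Real.rpow_pos_of_pos hM _)
    have : 0 ≤ lam3 * k * t := by positivity
    positivity
  have hAle : A ≤ v t ^ (-k) := by
    have : v 0 ^ (-k) ≤ v t ^ (-k) - lam3 * k * t := by
      rw [← hg0]; simpa [hg_def] using hg0t
    simp only [hA_def]
    linarith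
  have hvt : 0 < v t := hpos t ht
  -- v t ≤ A ^ (-(1/k))
  have hvle : v t ≤ A ^ (-(1 / k)) := by
    have h1 : (v t ^ (-k)) ^ (-(1 / k)) ≤ A ^ (-(1 / k)) :=
      Real.rpow_le_rpow_of_nonpos hApos hAle (neg_nonpos.mpr (by positivity))
    have h2 : (v t ^ (-k)) ^ (-(1 / k)) = v t := by
      rw [← Real.rpow_mul hvt.le]
      have : -k * -(1 / k) = 1 := by field_simp
      rw [this, Real.rpow_one]
    linarith [h1, h2.symm.le]
  -- conclude
  have hxr : ‖x t‖ ^ r1 ≤ (1 / lam1) * A ^ (-(1 / k)) := by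
    have := (hlow t ht).trans hvle
    rw [div_mul_eq_mul_div, one_mul, le_div_iff₀ hlam1]
    linarith [this]
  have hfin : ‖x t‖ ≤ ((1 / lam1) * A ^ (-(1 / k))) ^ (1 / r1) := by
    have h1 : (‖x t‖ ^ r1) ^ (1 / r1) ≤ ((1 / lam1) * A ^ (-(1 / k))) ^ (1 / r1) :=
      Real.rpow_le_rpow (Real.rpow_nonneg (norm_nonneg _) _) hxr (by positivity)
    have h2 : (‖x t‖ ^ r1) ^ (1 / r1) = ‖x t‖ := by
      rw [← Real.rpow_mul (norm_nonneg _)]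
      rw [mul_one_div, div_self hr1.ne', Real.rpow_one]
    linarith [h1, h2.symm.le]
  have heq : ((1 / lam1) * A ^ (-(1 / k))) ^ (1 / r1)
      = (1 / lam1) ^ (1 / r1) * A ^ (-(1 / (k * r1))) := by
    rw [Real.mul_rpow (by positivity) (Real.rpow_pos_of_pos hApos _).le,
      ← Real.rpow_mul hApos.le]
    congr 1
    field_simp
  rw [← hA_def] at *
  calc ‖x t‖ ≤ ((1 / lam1) * A ^ (-(1 / k))) ^ (1 / r1) := hfin
    _ = (1 / lam1) ^ (1 / r1) * A ^ (-(1 / (k * r1))) := heq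
end

section
/- Let E be a real normed vector space, let λ₁, λ₂, λ₃, r₁, r₂, r₃ be positive real numbers with r₂ < r₃, let x : [0,∞) → E, let s : [0,∞) → [0,∞), and let v : [0,∞) → ℝ be differentiable with v(t) > 0 for all t ≥ 0. Assume for all t ≥ 0: λ₁·‖x(t)‖^{r₁} ≤ v(t) ≤ λ₂·s(t)^{r₂} and v'(t) ≤ −λ₃·s(t)^{r₃}. Then, setting k = (r₃−r₂)/r₂ and λ = λ₃/λ₂^{r₃/r₂}, one has for all t ≥ 0: ‖x(t)‖ ≤ (1/λ₁)^{1/r₁}·(k·λ·t + v(0)^{-k})^{-1/(k·r₁)}. -/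
/-- Quantitative single-trajectory form of the corollary on global rational
stability, with `k = (r₃-r₂)/r₂` and `λ = λ₃/λ₂^{r₃/r₂}`. -/
theorem rational_stability_corollary
    {E : Type*} [NormedAddCommGroup E] [NormedSpace ℝ E]
    (lam1 lam2 lam3 r1 r2 r3 : ℝ)
    (hlam1 : 0 < lam1) (hlam2 : 0 < lam2) (hlam3 : 0 < lam3)
    (hr1 : 0 < r1) (hr2 : 0 < r2) (hr3 : 0 < r3) (hr23 : r2 < r3)
    (x : ℝ → E) (s : ℝ → ℝ) (hs : ∀ t, 0 ≤ t → 0 ≤ s t)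
    (v v' : ℝ → ℝ)
    (hderiv : ∀ t, 0 ≤ t → HasDerivAt v (v' t) t)
    (hpos : ∀ t, 0 ≤ t → 0 < v t)
    (hlow : ∀ t, 0 ≤ t → lam1 * ‖x t‖ ^ r1 ≤ v t)
    (hup : ∀ t, 0 ≤ t → v t ≤ lam2 * s t ^ r2)
    (hineq : ∀ t, 0 ≤ t → v' t ≤ -lam3 * s t ^ r3) :
    ∀ t, 0 ≤ t →
      ‖x t‖ ≤ (1 / lam1) ^ (1 / r1) *
        (((r3 - r2) / r2) * (lam3 / lam2 ^ (r3 / r2)) * t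
            + v 0 ^ (-((r3 - r2) / r2))) ^ (-(1 / (((r3 - r2) / r2) * r1))) := by
  intro t ht
  set k : ℝ := (r3 - r2) / r2 with hkdef
  set lam : ℝ := lam3 / lam2 ^ (r3 / r2) with hlamdef
  have hk0 : 0 < k := div_pos (by linarith) hr2
  have hlam2p : 0 < lam2 ^ (r3 / r2) := Real.rpow_pos_of_pos hlam2 _
  have hlam0 : 0 < lam := div_pos hlam3 hlam2p
  have hkr : k = r3 / r2 - 1 := by rw [hkdef, sub_div, div_self hr2.ne']
  -- the comparison function
  set g : ℝ → ℝ := fun u => v u ^ (-k) - k * lam * u with hgdef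
  have hgderiv : ∀ u ∈ Set.Ici (0:ℝ),
      HasDerivAt g (v' u * (-k) * v u ^ (-k - 1) - k * lam) u := by
    intro u hu
    have h1 := (hderiv u hu).rpow_const (p := -k) (Or.inl (hpos u hu).ne')
    have h2 : HasDerivAt (fun u : ℝ => k * lam * u) (k * lam) u := by
      simpa using (hasDerivAt_id u).const_mul (k * lam)
    exact h1.sub h2
  -- key differential inequality : v' u ≤ - lam * v u ^ (r3 / r2)
  have hkey : ∀ u, 0 ≤ u → v' u ≤ -lam * v u ^ (r3 / r2) := by
    intro u hu
    have hvpos := hpos u hu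
    have h1 : v u / lam2 ≤ s u ^ r2 := by
      rw [div_le_iff₀ hlam2]
      linarith [hup u hu, mul_comm (s u ^ r2) lam2]
    have h2 : (v u / lam2) ^ (r3 / r2) ≤ (s u ^ r2) ^ (r3 / r2) :=
      Real.rpow_le_rpow (by positivity) h1 (by positivity)
    have h3 : (s u ^ r2) ^ (r3 / r2) = s u ^ r3 := by
      rw [← Real.rpow_mul (hs u hu)]
      rw [mul_div_cancel₀ _ hr2.ne']
    have h4 : (v u / lam2) ^ (r3 / r2) = v u ^ (r3 / r2) / lam2 ^ (r3 / r2) :=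
      Real.div_rpow hvpos.le hlam2.le _
    have h5 : lam * v u ^ (r3 / r2) ≤ lam3 * s u ^ r3 := by
      rw [hlamdef]
      calc lam3 / lam2 ^ (r3 / r2) * v u ^ (r3 / r2)
          = lam3 * ((v u / lam2) ^ (r3 / r2)) := by rw [h4]; ring
        _ ≤ lam3 * (s u ^ r3) := by
            rw [← h3]; exact mul_le_mul_of_nonneg_left h2 hlam3.le
    have := hineq u hu
    nlinarith
  -- derivative of g is nonneg on positive u
  have hgd_nonneg : ∀ u, 0 ≤ u → 0 ≤ v' u * (-k) * v u ^ (-k - 1) - k * lam := by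
    intro u hu
    have hvpos := hpos u hu
    have hvp : 0 < v u ^ (-k - 1) := Real.rpow_pos_of_pos hvpos _
    have h1 : lam * v u ^ (r3 / r2) ≤ -v' u := by linarith [hkey u hu]
    have h2 : lam * v u ^ (r3 / r2) * (k * v u ^ (-k - 1)) ≤
        (-v' u) * (k * v u ^ (-k - 1)) :=
      mul_le_mul_of_nonneg_right h1 (by positivity)
    have h3 : v u ^ (r3 / r2) * v u ^ (-k - 1) = 1 := by
      rw [← Real.rpow_add hvpos]
      have : r3 / r2 + (-k - 1) = 0 := by rw [hkr]; ring
      rw [this, Real.rpow_zero]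
    have h4 : lam * v u ^ (r3 / r2) * (k * v u ^ (-k - 1)) = k * lam := by
      rw [show lam * v u ^ (r3 / r2) * (k * v u ^ (-k - 1))
          = k * lam * (v u ^ (r3 / r2) * v u ^ (-k - 1)) from by ring, h3, mul_one]
    have h5 : -v' u * (k * v u ^ (-k - 1)) = v' u * (-k) * v u ^ (-k - 1) := by ring
    linarith
  -- g is monotone on Ici 0
  have hmono : MonotoneOn g (Set.Ici (0:ℝ)) := by
    apply monotoneOn_of_deriv_nonneg (convex_Ici 0)
    · exact fun u hu => ((hgderiv u hu).continuousAt).continuousWithinAt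
    · intro u hu
      rw [interior_Ici] at hu
      exact ((hgderiv u (Set.mem_Ici.mpr (le_of_lt hu))).differentiableAt).differentiableWithinAt
    · intro u hu
      rw [interior_Ici] at hu
      rw [(hgderiv u (Set.mem_Ici.mpr (le_of_lt hu))).deriv]
      exact hgd_nonneg u (le_of_lt hu)
  have hg0t : g 0 ≤ g t := hmono (Set.self_mem_Ici) ht ht
  have hB : k * lam * t + v 0 ^ (-k) ≤ v t ^ (-k) := by
    have : g 0 = v 0 ^ (-k) := by simp [hgdef]
    have h2 : g t = v t ^ (-k) - k * lam * t := rfl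
    linarith [hg0t, this ▸ hg0t]
  set B : ℝ := k * lam * t + v 0 ^ (-k) with hBdef
  have hBpos : 0 < B := by
    have : 0 < v 0 ^ (-k) := Real.rpow_pos_of_pos (hpos 0 le_rfl) _
    have : 0 ≤ k * lam * t := by positivity
    positivity
  -- v t ≤ B ^ (-1/k)
  have hvB : v t ≤ B ^ (-(1 / k)) := by
    have h1 : (v t ^ (-k)) ^ (-(1 / k)) ≤ B ^ (-(1 / k)) :=
      Real.rpow_le_rpow_of_nonpos hBpos hB (neg_nonpos.mpr (by positivity))
    have h2 : (v t ^ (-k)) ^ (-(1 / k)) = v t := by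
      rw [← Real.rpow_mul (hpos t ht).le,
        show (-k) * -(1 / k) = 1 by field_simp, Real.rpow_one]
    linarith [h2 ▸ h1]
  -- conclude
  have hvt := hpos t ht
  have hx1 : ‖x t‖ ^ r1 ≤ v t / lam1 := by
    rw [le_div_iff₀ hlam1]
    linarith [hlow t ht, mul_comm (‖x t‖ ^ r1) lam1]
  have hx2 : ‖x t‖ ≤ (v t / lam1) ^ (1 / r1) := by
    have h1 : (‖x t‖ ^ r1) ^ (1 / r1) ≤ (v t / lam1) ^ (1 / r1) :=
      Real.rpow_le_rpow (by positivity) hx1 (by positivity)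
    have h2 : (‖x t‖ ^ r1) ^ (1 / r1) = ‖x t‖ := by
      rw [← Real.rpow_mul (norm_nonneg _), mul_one_div, div_self hr1.ne',
        Real.rpow_one]
    linarith [h2 ▸ h1]
  have hx3 : (v t / lam1) ^ (1 / r1) = (1 / lam1) ^ (1 / r1) * v t ^ (1 / r1) := by
    rw [Real.div_rpow hvt.le hlam1.le _, Real.div_rpow zero_le_one hlam1.le _,
      Real.one_rpow]
    ring
  have hx4 : v t ^ (1 / r1) ≤ B ^ (-(1 / (k * r1))) := by
    have h1 : v t ^ (1 / r1) ≤ (B ^ (-(1 / k))) ^ (1 / r1) :=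
      Real.rpow_le_rpow hvt.le hvB (by positivity)
    have h2 : (B ^ (-(1 / k))) ^ (1 / r1) = B ^ (-(1 / (k * r1))) := by
      rw [← Real.rpow_mul hBpos.le]
      congr 1
      field_simp
    linarith [h2 ▸ h1]
  calc ‖x t‖ ≤ (v t / lam1) ^ (1 / r1) := hx2
    _ = (1 / lam1) ^ (1 / r1) * v t ^ (1 / r1) := hx3
    _ ≤ (1 / lam1) ^ (1 / r1) * B ^ (-(1 / (k * r1))) :=
        mul_le_mul_of_nonneg_left hx4 (by positivity)
end

section
/- Let n ≥ 1, θ ≥ 1, and k > 0. Let f : ℝⁿ × ℝⁿ → ℝⁿ be a map whose i-th component fᵢ depends only on the first i coordinates of each of its two arguments (i.e., fᵢ(x,z) = fᵢ(y,w) whenever xⱼ = yⱼ and zⱼ = wⱼ for all j ≤ i), and such that each component satisfies |fᵢ(x,z) − fᵢ(y,w)| ≤ k·(‖x−y‖ + ‖z−w‖) for all x, y, z, w ∈ ℝⁿ, where ‖·‖ is the Euclidean norm. Let Δ_θ = diag(1, θ^{-1}, …, θ^{-(n-1)}). Then for all x, y, z, w ∈ ℝⁿ: ‖Δ_θ(f(x,z)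 − f(y,w))‖ ≤ √n · k · (‖Δ_θ(x−y)‖ + ‖Δ_θ(z−w)‖). -/
/-- High-gain Lipschitz estimate for a triangular globally Lipschitz map:
scaling by `Δ_θ = diag(1, θ⁻¹, …, θ^{-(n-1)})` (with `θ ≥ 1`) preserves the
Lipschitz bound up to a factor `√n`. -/
theorem highgain_lipschitz_estimate
    (n : ℕ) (hn : 1 ≤ n) (θ k : ℝ) (hθ : 1 ≤ θ) (hk : 0 < k)
    (f : EuclideanSpace ℝ (Fin n) → EuclideanSpace ℝ (Fin n) → EuclideanSpace ℝ (Fin n))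
    (htri : ∀ (i : Fin n) (x y z w : EuclideanSpace ℝ (Fin n)),
      (∀ j : Fin n, j ≤ i → x j = y j ∧ z j = w j) → f x z i = f y w i)
    (hlip : ∀ (i : Fin n) (x y z w : EuclideanSpace ℝ (Fin n)),
      |f x z i - f y w i| ≤ k * (‖x - y‖ + ‖z - w‖))
    (Dθ : EuclideanSpace ℝ (Fin n) → EuclideanSpace ℝ (Fin n))
    (hDθ : ∀ (v : EuclideanSpace ℝ (Fin n)) (i : Fin n),
      Dθ v i = θ ^ (-((i : ℕ) : ℤ)) * v i) :
    ∀ x y z w : EuclideanSpace ℝ (Fin n),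
      ‖Dθ (f x z - f y w)‖ ≤
        Real.sqrt n * k * (‖Dθ (x - y)‖ + ‖Dθ (z - w)‖) := by
  have hθ0 : (0:ℝ) < θ := lt_of_lt_of_le one_pos hθ
  have hpow : ∀ i : Fin n, (0:ℝ) < θ ^ (-((i:ℕ):ℤ)) := fun i => zpow_pos hθ0 _
  have key : ∀ (i : Fin n) (u v : EuclideanSpace ℝ (Fin n)),
      θ ^ (-((i:ℕ):ℤ)) *
        Real.sqrt (∑ j : Fin n, if j ≤ i then (u j - v j)^2 else 0)
      ≤ ‖Dθ (u - v)‖ := by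
    intro i u v
    rw [EuclideanSpace.norm_eq]
    have hsum : (θ ^ (-((i:ℕ):ℤ)))^2 * ∑ j : Fin n, (if j ≤ i then (u j - v j)^2 else 0)
        ≤ ∑ j : Fin n, ‖Dθ (u - v) j‖^2 := by
      rw [Finset.mul_sum]
      apply Finset.sum_le_sum
      intro j _
      have hsub : (u - v) j = u j - v j := rfl
      rw [hDθ, hsub, Real.norm_eq_abs, sq_abs, mul_pow]
      by_cases hj : j ≤ i
      · simp only [hj, if_true]
        apply mul_le_mul_of_nonneg_right _ (sq_nonneg _)
        apply pow_le_pow_left₀ (le_of_lt (hpow i))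
        exact zpow_le_zpow_right₀ hθ (by exact_mod_cast neg_le_neg (Int.ofNat_le.mpr (Fin.le_iff_val_le_val.mp hj)))
      · simp only [hj, if_false, mul_zero]
        positivity
    calc θ ^ (-((i:ℕ):ℤ)) * Real.sqrt (∑ j : Fin n, if j ≤ i then (u j - v j)^2 else 0)
        = Real.sqrt ((θ ^ (-((i:ℕ):ℤ)))^2 * ∑ j : Fin n, if j ≤ i then (u j - v j)^2 else 0) := by
          rw [Real.sqrt_mul (sq_nonneg _), Real.sqrt_sq (le_of_lt (hpow i))]
      _ ≤ _ := Real.sqrt_le_sqrt hsum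
  intro x y z w
  set B := k * (‖Dθ (x - y)‖ + ‖Dθ (z - w)‖) with hBdef
  have hB0 : 0 ≤ B := by positivity
  have hcoord : ∀ i : Fin n, |Dθ (f x z - f y w) i| ≤ B := by
    intro i
    have hsub : (f x z - f y w) i = f x z i - f y w i := rfl
    rw [hDθ, hsub, abs_mul, abs_of_pos (hpow i)]
    -- truncate
    set x' : EuclideanSpace ℝ (Fin n) := WithLp.toLp 2 (fun j => if j ≤ i then x j else y j) with hx'
    set z' : EuclideanSpace ℝ (Fin n) := WithLp.toLp 2 (fun j => if j ≤ i then z j else w j) with hz'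
    have hfx : f x z i = f x' z' i := htri i x x' z z' (fun j hj => by
      constructor <;> simp [hx', hz', hj])
    rw [hfx]
    have hnx : ‖x' - y‖ = Real.sqrt (∑ j : Fin n, if j ≤ i then (x j - y j)^2 else 0) := by
      rw [EuclideanSpace.norm_eq]
      congr 1
      apply Finset.sum_congr rfl
      intro j _
      have : (x' - y) j = x' j - y j := rfl
      rw [this, Real.norm_eq_abs, sq_abs, hx']
      by_cases hj : j ≤ i <;> simp [hj]
    have hnz : ‖z' - w‖ = Real.sqrt (∑ j : Fin n, if j ≤ i then (z j - w j)^2 else 0) := by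
      rw [EuclideanSpace.norm_eq]
      congr 1
      apply Finset.sum_congr rfl
      intro j _
      have : (z' - w) j = z' j - w j := rfl
      rw [this, Real.norm_eq_abs, sq_abs, hz']
      by_cases hj : j ≤ i <;> simp [hj]
    calc θ ^ (-((i:ℕ):ℤ)) * |f x' z' i - f y w i|
        ≤ θ ^ (-((i:ℕ):ℤ)) * (k * (‖x' - y‖ + ‖z' - w‖)) :=
          mul_le_mul_of_nonneg_left (hlip i x' y z' w) (le_of_lt (hpow i))
      _ = k * (θ ^ (-((i:ℕ):ℤ)) * ‖x' - y‖ + θ ^ (-((i:ℕ):ℤ)) * ‖z' - w‖) := by ring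
      _ ≤ B := by
          rw [hBdef]
          apply mul_le_mul_of_nonneg_left _ (le_of_lt hk)
          apply add_le_add
          · rw [hnx]; exact key i x y
          · rw [hnz]; exact key i z w
  -- conclude
  rw [EuclideanSpace.norm_eq]
  have hsum : ∑ i : Fin n, ‖Dθ (f x z - f y w) i‖^2 ≤ (n : ℝ) * B^2 := by
    calc ∑ i : Fin n, ‖Dθ (f x z - f y w) i‖^2 ≤ ∑ _i : Fin n, B^2 := by
          apply Finset.sum_le_sum
          intro i _
          rw [Real.norm_eq_abs, ← sq_abs B]
          exact pow_le_pow_left₀ (abs_nonneg _) (by rw [abs_of_nonneg hB0]; exact hcoord i) 2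
      _ = (n : ℝ) * B^2 := by simp [mul_comm]
  calc Real.sqrt (∑ i : Fin n, ‖Dθ (f x z - f y w) i‖^2)
      ≤ Real.sqrt ((n : ℝ) * B^2) := Real.sqrt_le_sqrt hsum
    _ = Real.sqrt n * B := by
        rw [Real.sqrt_mul (Nat.cast_nonneg n), Real.sqrt_sq hB0]
    _ = Real.sqrt n * k * (‖Dθ (x - y)‖ + ‖Dθ (z - w)‖) := by rw [hBdef]; ring
end
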